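/- Let φ : A → B be a degree-preserving homomorphism of connected graded k-algebras such that A is effectively coherent and B is finitely presented as a graded right A-module (via φ). Then B is effectively coherent. Moreover, if p = m(B_A) is a degree bound for the generators of B over A and D witnesses the effective coherence of B as an A-module, then d ↦ max{d + p, D(d + p)} witnesses the effective coherence of the algebra B. -/

import Mathlib

open MulOpposite

namespace NCG

variable (k : Type) [Field k] (R : Type) [Ring R] [Algebra k R]

/-- `𝒜` is a connected grading on the `k`-algebra `R`: the graded pieces multiply
correctly, `R` is their internal direct sum, and the degree-zero piece is `k·1`. -/
def IsConnAlg (𝒜 : ℕ → Submodule k R) : Prop :=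
  (∀ (i j : ℕ), ∀ x ∈ 𝒜 i, ∀ y ∈ 𝒜 j, x * y ∈ 𝒜 (i + j)) ∧
  DirectSum.IsInternal 𝒜 ∧
  𝒜 0 = Submodule.span k {(1 : R)}

/-- `R` is locally finite: every graded piece is finite-dimensional over `k`. -/
def LocFin (𝒜 : ℕ → Submodule k R) : Prop := ∀ i, FiniteDimensional k (𝒜 i)

/-- `R` is a finitely generated `k`-algebra. -/
def FinGenAlg : Prop := ∃ s : Finset R, Algebra.adjoin k (s : Set R) = ⊤

/-- extension of the grading to `ℤ` (zero in negative degrees). -/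
noncomputable def grZ (𝒜 : ℕ → Submodule k R) : ℤ → Submodule k R :=
  fun j => if 0 ≤ j then 𝒜 j.toNat else ⊥

/-- the augmentation ideal `R_{≥1}`, as a right ideal of `R`. -/
def aug (𝒜 : ℕ → Submodule k R) : Submodule Rᵐᵒᵖ R :=
  Submodule.span Rᵐᵒᵖ (⋃ i : ℕ, ⋃ _ : 1 ≤ i, ((𝒜 i : Set R)))

variable (M : Type) [AddCommGroup M] [Module Rᵐᵒᵖ M] [Module k M]

/-- `ℳ` makes `M` a graded right module over the graded algebra `(R, 𝒜)`. -/
def IsGradedMod (𝒜 : ℕ → Submodule k R) (ℳ : ℤ → Submodule k M) : Prop :=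
  (∀ (i : ℕ) (j : ℤ), ∀ r ∈ 𝒜 i, ∀ x ∈ ℳ j, (op r) • x ∈ ℳ (j + i)) ∧
  DirectSum.IsInternal ℳ

/-- the submodule `N` of `M` is generated in degrees at most `dd`. -/
def GenLE (ℳ : ℤ → Submodule k M) (N : Submodule Rᵐᵒᵖ M) (dd : ℤ) : Prop :=
  N ≤ Submodule.span Rᵐᵒᵖ {x : M | x ∈ N ∧ ∃ j ≤ dd, x ∈ ℳ j}

/-- the submodule `N` is a graded (homogeneous) submodule of `M`. -/
def IsGradedSub (ℳ : ℤ → Submodule k M) (N : Submodule Rᵐᵒᵖ M) : Prop :=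
  N ≤ Submodule.span Rᵐᵒᵖ {x : M | x ∈ N ∧ ∃ j : ℤ, x ∈ ℳ j}

/-- the Hilbert series of a submodule `N` of `M`, as its coefficient function. -/
noncomputable def hilb (ℳ : ℤ → Submodule k M) [IsScalarTower k Rᵐᵒᵖ M]
    (N : Submodule Rᵐᵒᵖ M) : ℤ → ℕ :=
  fun j => Module.finrank k ↥(ℳ j ⊓ N.restrictScalars k)

/-- the Hilbert series of a right ideal of `R`, as its coefficient function. -/
noncomputable def hilbI (𝒜 : ℕ → Submodule k R) (I : Submodule Rᵐᵒᵖ R) : ℕ → ℕ :=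
  fun j => Module.finrank k ↥(𝒜 j ⊓ I.restrictScalars k)

/-- the Hilbert series of the algebra `R`, as its coefficient function. -/
noncomputable def hilbA (𝒜 : ℕ → Submodule k R) : ℕ → ℕ :=
  fun j => Module.finrank k ↥(𝒜 j)

/-- `v` is a solution of the homogeneous linear equation `a₁x₁ + ⋯ + aₙxₙ = 0`. -/
def IsSol {n : ℕ} (a : Fin n → M) (v : Fin n → R) : Prop :=
  ∑ i, op (v i) • a i = 0

/-- `w` is a homogeneous element of degree `j` of the free module `⊕ᵢ R(-dg i)`. -/
def FreeHomog (𝒜 : ℕ → Submodule k R) {n : ℕ} (dg : Fin n → ℤ)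
    (w : Fin n → R) (j : ℤ) : Prop :=
  ∀ i, w i ∈ grZ k R 𝒜 (j - dg i)

/-- The module of solutions of the equation with homogeneous coefficients `a` (of
degrees `dg`) is generated in degrees at most `D`: every solution is an `R`-linear
combination of homogeneous solutions of degree at most `D`. -/
def SolGenLE (𝒜 : ℕ → Submodule k R) {n : ℕ} (a : Fin n → M) (dg : Fin n → ℤ)
    (D : ℤ) : Prop :=
  ∀ v : Fin n → R, IsSol R M a v →
    v ∈ Submodule.span Rᵐᵒᵖ
      {w : Fin n → R | IsSol R M a w ∧ ∃ j ≤ D, FreeHomog k R 𝒜 dg w j}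

/-- The module of solutions of the equation with coefficients `a` is generated by the
(finitely many) solutions `h`. -/
def SolSpanBy {n : ℕ} (a : Fin n → M) {m : ℕ} (h : Fin m → (Fin n → R)) : Prop :=
  (∀ j, IsSol R M a (h j)) ∧
  ∀ v : Fin n → R, IsSol R M a v → v ∈ Submodule.span Rᵐᵒᵖ (Set.range h)

/-- `D` witnesses the effective coherence of the graded module `M`. -/
def WitnessEC (𝒜 : ℕ → Submodule k R) (ℳ : ℤ → Submodule k M) (D : ℕ → ℕ) : Prop :=
  (∀ d, d ≤ D d) ∧
  ∀ (d n : ℕ) (a : Fin n → M) (dg : Fin n → ℤ),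
    (∀ i, a i ∈ ℳ (dg i)) → (∀ i, dg i ≤ (d : ℤ)) →
    SolGenLE k R M 𝒜 a dg ((D d : ℕ) : ℤ)

/-- the graded module `M` is effectively coherent. -/
def EffCoh (𝒜 : ℕ → Submodule k R) (ℳ : ℤ → Submodule k M) : Prop :=
  ∃ D : ℕ → ℕ, WitnessEC k R M 𝒜 ℳ D

/-- the algebra `R` is effectively coherent (as a right module over itself). -/
noncomputable def EffCohAlg (𝒜 : ℕ → Submodule k R) : Prop :=
  EffCoh k R R 𝒜 (grZ k R 𝒜)

/-- `M` is a finitely presented graded right `R`-module. -/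
def ModFinPres (𝒜 : ℕ → Submodule k R) (ℳ : ℤ → Submodule k M) : Prop :=
  ∃ (t : ℕ) (b : Fin t → M) (db : Fin t → ℤ),
    (∀ i, b i ∈ ℳ (db i)) ∧ Submodule.span Rᵐᵒᵖ (Set.range b) = ⊤ ∧
    ∃ (m : ℕ) (h : Fin m → (Fin t → R)) (e : Fin m → ℤ),
      (∀ j, FreeHomog k R 𝒜 db (h j) (e j)) ∧ SolSpanBy R M b h

/-- `R` is a finitely presented algebra: there is an exact sequence
`F₂ → F₁ → R → k_R → 0` of graded right modules with `F₁, F₂` finite graded free. -/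
def AlgFinPres (𝒜 : ℕ → Submodule k R) : Prop :=
  ∃ (n : ℕ) (g : Fin n → R) (dg : Fin n → ℕ),
    (∀ i, g i ∈ 𝒜 (dg i)) ∧
    Submodule.span Rᵐᵒᵖ (Set.range g) = aug k R 𝒜 ∧
    ∃ (m : ℕ) (h : Fin m → (Fin n → R)) (e : Fin m → ℤ),
      (∀ j, FreeHomog k R 𝒜 (fun i => (dg i : ℤ)) (h j) (e j)) ∧
      SolSpanBy R R g h

/-- `R` admits an exact sequence `F₃ → F₂ → F₁ → R → k_R → 0` of graded right modules
with all `Fᵢ` finite graded free (finitely presented with `dim Tor₃ < ∞`). -/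
def AlgFinPres3 (𝒜 : ℕ → Submodule k R) : Prop :=
  ∃ (n : ℕ) (g : Fin n → R) (dg : Fin n → ℕ),
    (∀ i, g i ∈ 𝒜 (dg i)) ∧
    Submodule.span Rᵐᵒᵖ (Set.range g) = aug k R 𝒜 ∧
    ∃ (m : ℕ) (h : Fin m → (Fin n → R)) (e : Fin m → ℤ),
      (∀ j, FreeHomog k R 𝒜 (fun i => (dg i : ℤ)) (h j) (e j)) ∧
      SolSpanBy R R g h ∧
      ∃ (p : ℕ) (u : Fin p → (Fin m → R)) (f : Fin p → ℤ),
        (∀ l, FreeHomog k R 𝒜 e (u l) (f l)) ∧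
        SolSpanBy R (Fin n → R) h u

/-- membership in the class `D(n,a,b,c)`: there is an exact sequence
`F₃ → F₂ → F₁ → R → k_R → 0` with `F₁` of rank at most `n` and basis in degrees `≤ a`,
`F₂` with basis in degrees `≤ b` and `F₃` with basis in degrees `≤ c`. -/
def InDClass (𝒜 : ℕ → Submodule k R) (n a b c : ℕ) : Prop :=
  ∃ (n' : ℕ), n' ≤ n ∧ ∃ (g : Fin n' → R) (dg : Fin n' → ℕ),
    (∀ i, dg i ≤ a) ∧ (∀ i, g i ∈ 𝒜 (dg i)) ∧
    Submodule.span Rᵐᵒᵖ (Set.range g) = aug k R 𝒜 ∧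
    ∃ (m : ℕ) (h : Fin m → (Fin n' → R)) (e : Fin m → ℤ),
      (∀ j, e j ≤ (b : ℤ)) ∧
      (∀ j, FreeHomog k R 𝒜 (fun i => (dg i : ℤ)) (h j) (e j)) ∧
      SolSpanBy R R g h ∧
      SolGenLE k R (Fin n' → R) 𝒜 h e (c : ℤ)

/-- the right ideal `I` has a finite homogeneous generating family in degrees `≤ d`. -/
def FinGenLE (𝒜 : ℕ → Submodule k R) (I : Submodule Rᵐᵒᵖ R) (d : ℕ) : Prop :=
  ∃ (n : ℕ) (x : Fin n → R) (dx : Fin n → ℕ),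
    (∀ i, dx i ≤ d) ∧ (∀ i, x i ∈ 𝒜 (dx i)) ∧
    Submodule.span Rᵐᵒᵖ (Set.range x) = I

/-- lexicographic strict order on `ℕ`-indexed coefficient functions: `f <_lex g`. -/
def LexLtN (f g : ℕ → ℕ) : Prop := ∃ q, (∀ i < q, f i = g i) ∧ f q < g q

/-- lexicographic strict order on `ℤ`-indexed coefficient functions: `f <_lex g`. -/
def LexLtZ (f g : ℤ → ℕ) : Prop := ∃ q, (∀ i < q, f i = g i) ∧ f q < g q

/-- the right annihilator ideal of an element `a : R`. -/
def rAnn (a : R) : Submodule Rᵐᵒᵖ R where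
  carrier := {r : R | a * r = 0}
  add_mem' := by
    intro x y hx hy
    simp only [Set.mem_setOf_eq] at *
    rw [mul_add, hx, hy, add_zero]
  zero_mem' := by simp
  smul_mem' := by
    intro c x hx
    simp only [Set.mem_setOf_eq] at *
    rw [← op_unop c, op_smul_eq_mul, ← mul_assoc, hx, zero_mul]

/-- the colon right ideal `(x : J) = { a ∈ R | x·a ∈ J }`. -/
def colon (x : R) (J : Submodule Rᵐᵒᵖ R) : Submodule Rᵐᵒᵖ R where
  carrier := {a : R | x * a ∈ J}
  add_mem' := by
    intro p q hp hq
    simp only [Set.mem_setOf_eq] at *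
    rw [mul_add]; exact J.add_mem hp hq
  zero_mem' := by simp
  smul_mem' := by
    intro c p hp
    simp only [Set.mem_setOf_eq] at *
    rw [← op_unop c, op_smul_eq_mul, ← mul_assoc]
    exact J.smul_mem (op (unop c)) hp

/-- `F` is a coherent family of right ideals of `R`. -/
def IsCohFam (𝒜 : ℕ → Submodule k R) (F : Set (Submodule Rᵐᵒᵖ R)) : Prop :=
  (∀ I ∈ F, I.FG ∧ IsGradedSub k R R (grZ k R 𝒜) I) ∧
  (⊥ : Submodule Rᵐᵒᵖ R) ∈ F ∧ aug k R 𝒜 ∈ F ∧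
  ∀ I ∈ F, I ≠ ⊥ → ∃ J ∈ F, J ≠ I ∧ ∃ x : R, (∃ dx : ℕ, x ∈ 𝒜 dx) ∧ x ∈ I ∧
    I = J ⊔ Submodule.span Rᵐᵒᵖ {x} ∧
    (∀ dI : ℤ, GenLE k R R (grZ k R 𝒜) I dI → GenLE k R R (grZ k R 𝒜) J dI) ∧
    colon R x J ∈ F

/-- the family `F` of ideals has degree at most `d`. -/
def CohFamDegLE (𝒜 : ℕ → Submodule k R) (F : Set (Submodule Rᵐᵒᵖ R)) (d : ℕ) : Prop :=
  ∀ I ∈ F, GenLE k R R (grZ k R 𝒜) I (d : ℤ)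

/-- the right ideal `I` is finitely presented as a graded module. -/
def IdealFinPres (𝒜 : ℕ → Submodule k R) (I : Submodule Rᵐᵒᵖ R) : Prop :=
  ∃ (n : ℕ) (x : Fin n → R) (dx : Fin n → ℕ),
    (∀ i, x i ∈ 𝒜 (dx i)) ∧ Submodule.span Rᵐᵒᵖ (Set.range x) = I ∧
    ∃ (m : ℕ) (h : Fin m → (Fin n → R)) (e : Fin m → ℤ),
      (∀ j, FreeHomog k R 𝒜 (fun i => (dx i : ℤ)) (h j) (e j)) ∧
      SolSpanBy R R x h

/-- `R` is graded right coherent: every finitely generated homogeneous right ideal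
is finitely presented as a graded module. -/
def GradedCoherent (𝒜 : ℕ → Submodule k R) : Prop :=
  ∀ I : Submodule Rᵐᵒᵖ R, I.FG → IsGradedSub k R R (grZ k R 𝒜) I →
    IdealFinPres k R 𝒜 I

/-- a free resolution of the right ideal `I` by finite graded free modules whose
bases at level `i` sit in degrees at most `B i`. -/
def FreeResBdd (𝒜 : ℕ → Submodule k R) (I : Submodule Rᵐᵒᵖ R) (B : ℕ → ℤ) : Prop :=
  ∃ (r : ℕ → ℕ) (dgs : (i : ℕ) → Fin (r i) → ℤ)
    (g0 : Fin (r 0) → R)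
    (g : (i : ℕ) → Fin (r (i + 1)) → (Fin (r i) → R)),
    (∀ l, dgs 0 l ≤ B 0) ∧
    (∀ l, g0 l ∈ grZ k R 𝒜 (dgs 0 l)) ∧
    Submodule.span Rᵐᵒᵖ (Set.range g0) = I ∧
    (∀ (i : ℕ) (l : Fin (r (i + 1))), dgs (i + 1) l ≤ B (i + 1)) ∧
    (∀ (i : ℕ) (l : Fin (r (i + 1))), FreeHomog k R 𝒜 (dgs i) (g i l) (dgs (i + 1) l)) ∧
    SolSpanBy R R g0 (g 0) ∧
    (∀ i : ℕ, SolSpanBy R (Fin (r i) → R) (g i) (g (i + 1)))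

/-- the Artin–Zhang property for a graded module `M`. -/
def ArtinZhang (ℳ : ℤ → Submodule k M) [IsScalarTower k Rᵐᵒᵖ M] : Prop :=
  ∀ h : ℤ → ℕ, ∃ d : ℤ, 0 < d ∧
    (∀ L : Submodule Rᵐᵒᵖ M, L.FG → hilb k R M ℳ L = h → GenLE k R M ℳ L d) ∧
    (∀ L : Submodule Rᵐᵒᵖ M, GenLE k R M ℳ L d →
      (∀ j ≤ d, hilb k R M ℳ L j = h j) → hilb k R M ℳ L = h)

/-- `M` is effective for series: for each `d`, only finitely many Hilbert series of
submodules generated in degrees `≤ d`. -/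
def EffForSeries (ℳ : ℤ → Submodule k M) [IsScalarTower k Rᵐᵒᵖ M] : Prop :=
  ∀ d : ℤ, {h : ℤ → ℕ | ∃ L : Submodule Rᵐᵒᵖ M,
    GenLE k R M ℳ L d ∧ h = hilb k R M ℳ L}.Finite

/-- `M` is effective for generators: the Hilbert series of a finitely generated
submodule bounds the degrees of its generators. -/
def EffForGen (ℳ : ℤ → Submodule k M) [IsScalarTower k Rᵐᵒᵖ M] : Prop :=
  ∀ h : ℤ → ℕ, ∃ d : ℤ,
    ∀ L : Submodule Rᵐᵒᵖ M, L.FG → hilb k R M ℳ L = h → GenLE k R M ℳ L d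

/-- bundled data of a graded `k`-algebra. -/
structure AlgData (k : Type) [Field k] : Type 1 where
  carrier : Type
  [ringStr : Ring carrier]
  [algStr : Algebra k carrier]
  grading : ℕ → Submodule k carrier

attribute [instance] AlgData.ringStr AlgData.algStr

/-- bundled data of a graded right `R`-module. -/
structure ModData (k R : Type) [Field k] [Ring R] [Algebra k R] : Type 1 where
  carrier : Type
  [acg : AddCommGroup carrier]
  [modR : Module Rᵐᵒᵖ carrier]
  [modk : Module k carrier]
  [tower : IsScalarTower k Rᵐᵒᵖ carrier]
  grading : ℤ → Submodule k carrier

attribute [instance] ModData.acg ModData.modR ModData.modk ModData.tower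


section Aux2
variable (k : Type) [Field k] (A : Type) [Ring A] [Algebra k A]

-- copies from w.lean (will merge later)
lemma grZ_mul' (𝒜 : ℕ → Submodule k A)
    (hmul : ∀ (i j : ℕ), ∀ x ∈ 𝒜 i, ∀ y ∈ 𝒜 j, x * y ∈ 𝒜 (i + j))
    {s t : ℤ} {x y : A} (hx : x ∈ grZ k A 𝒜 s) (hy : y ∈ grZ k A 𝒜 t) :
    x * y ∈ grZ k A 𝒜 (s + t) := by
  by_cases hs : 0 ≤ s
  · by_cases ht : 0 ≤ t
    · have hst : 0 ≤ s + t := by omega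
      simp only [grZ, if_pos hs, if_pos ht, if_pos hst] at *
      have : (s+t).toNat = s.toNat + t.toNat := by omega
      rw [this]
      exact hmul _ _ _ hx _ hy
    · simp only [grZ, if_neg ht, Submodule.mem_bot] at hy
      rw [hy, mul_zero]; exact (grZ k A 𝒜 (s+t)).zero_mem
  · simp only [grZ, if_neg hs, Submodule.mem_bot] at hx
    rw [hx, zero_mul]; exact (grZ k A 𝒜 (s+t)).zero_mem

lemma grZ_congr' (𝒜 : ℕ → Submodule k A) {s t : ℤ} (h : s = t) {x : A}
    (hx : x ∈ grZ k A 𝒜 s) : x ∈ grZ k A 𝒜 t := h ▸ hx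

lemma span_transfer' {R S M N : Type} [Ring R] [Ring S] [AddCommGroup M]
    [AddCommGroup N] [Module R M] [Module S N] (T : M → N) (ρ : R → S)
    (hadd : ∀ x y, T (x + y) = T x + T y)
    (hsmul : ∀ (r : R) (x : M), T (r • x) = ρ r • T x)
    (h0 : T 0 = 0) {s : Set M} {x : M} (hx : x ∈ Submodule.span R s) :
    T x ∈ Submodule.span S (T '' s) := by
  induction hx using Submodule.span_induction with
  | mem y hy => exact Submodule.subset_span ⟨y, hy, rfl⟩
  | zero => rw [h0]; exact Submodule.zero_mem _
  | add y z _ _ hy hz => rw [hadd]; exact Submodule.add_mem _ hy hz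
  | smul r y _ hy => rw [hsmul]; exact Submodule.smul_mem _ _ hy

lemma witness_gen' (𝒜 : ℕ → Submodule k A)
    (M : Type) [AddCommGroup M] [Module Aᵐᵒᵖ M] [Module k M]
    (ℳ : ℤ → Submodule k M) (D : ℕ → ℕ)
    (hD : WitnessEC k A M 𝒜 ℳ D) (ι : Type) [Fintype ι] (d : ℤ)
    (a : ι → M) (dg : ι → ℤ) (ha : ∀ i, a i ∈ ℳ (dg i))
    (hdg : ∀ i, dg i ≤ d) (v : ι → A) (hv : ∑ i, op (v i) • a i = 0) :
    v ∈ Submodule.span Aᵐᵒᵖ {w : ι → A | (∑ i, op (w i) • a i = 0) ∧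
      ∃ j ≤ ((D d.toNat : ℕ) : ℤ), ∀ i, w i ∈ grZ k A 𝒜 (j - dg i)} := by
  classical
  let e := Fintype.equivFin ι
  have hsol : IsSol A M (a ∘ e.symm) (v ∘ e.symm) :=
    (Equiv.sum_comp e.symm (fun i => op (v i) • a i)).trans hv
  have key := hD.2 d.toNat (Fintype.card ι) (a ∘ e.symm) (dg ∘ e.symm)
    (fun i' => ha (e.symm i'))
    (fun i' => le_trans (hdg (e.symm i')) (Int.self_le_toNat d))
    (v ∘ e.symm) hsol
  have hT := span_transfer' (T := fun (w : Fin (Fintype.card ι) → A) => w ∘ e)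
    (ρ := @id Aᵐᵒᵖ) (fun x y => rfl) (fun r x => rfl) rfl key
  have himg : (fun (w : Fin (Fintype.card ι) → A) => w ∘ e) ''
      {w | IsSol A M (a ∘ e.symm) w ∧ ∃ j ≤ ((D d.toNat : ℕ) : ℤ),
        FreeHomog k A 𝒜 (dg ∘ e.symm) w j} ⊆
      {w : ι → A | (∑ i, op (w i) • a i = 0) ∧
        ∃ j ≤ ((D d.toNat : ℕ) : ℤ), ∀ i, w i ∈ grZ k A 𝒜 (j - dg i)} := by
    rintro _ ⟨w, ⟨hw1, j, hj, hw2⟩, rfl⟩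
    refine ⟨?_, j, hj, ?_⟩
    · refine (Fintype.sum_equiv e _ (fun i' => op (w i') • (a ∘ e.symm) i') ?_).trans hw1
      intro i; simp
    · intro i
      have := hw2 (e i)
      simpa using this
  have hvv : (fun (w : Fin (Fintype.card ι) → A) => w ∘ e) (v ∘ e.symm) = v := by
    funext i; simp
  rw [show (v ∘ e.symm) ∘ e = v from hvv] at hT
  exact Submodule.span_mono himg hT

lemma sum_swap_mul {ι κ : Type} [Fintype ι] [Fintype κ] (x : ι → A)
    (y : ι → κ → A) (z : κ → A) :
    ∑ i, x i * (∑ r, y i r * z r) = ∑ r, (∑ i, x i * y i r) * z r := by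
  simp_rw [Finset.mul_sum, Finset.sum_mul, mul_assoc]
  rw [Finset.sum_comm]

/-- effective coherence for systems of equations (finite free modules) -/
lemma systems (𝒜 : ℕ → Submodule k A)
    (hmul : ∀ (i j : ℕ), ∀ x ∈ 𝒜 i, ∀ y ∈ 𝒜 j, x * y ∈ 𝒜 (i + j))
    (hone : (1 : A) ∈ 𝒜 0)
    (D : ℕ → ℕ) (hD : WitnessEC k A A 𝒜 (grZ k A 𝒜) D) :
    ∀ (t : ℕ) (db : Fin t → ℤ), ∃ E : ℤ → ℤ, (∀ d, d ≤ E d) ∧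
      ∀ (d : ℤ) (ι : Type) [Fintype ι] (a : ι → Fin t → A) (dg : ι → ℤ),
        (∀ i s, a i s ∈ grZ k A 𝒜 (dg i - db s)) → (∀ i, dg i ≤ d) →
        ∀ v : ι → A, (∑ i, op (v i) • a i = 0) →
        v ∈ Submodule.span Aᵐᵒᵖ {w : ι → A | (∑ i, op (w i) • a i = 0) ∧
          ∃ j ≤ E d, ∀ i, w i ∈ grZ k A 𝒜 (j - dg i)} := by
  intro t
  induction t with
  | zero =>
    intro db
    refine ⟨id, fun d => le_refl d, ?_⟩
    intro d ι _ a dg ha hdg v hv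
    classical
    have hv' : v = ∑ i₀, op (v i₀) • Pi.single i₀ (1 : A) := by
      funext i
      simp [Finset.sum_apply, Pi.single_apply, op_smul_eq_mul, ite_mul]
    rw [hv']
    refine Submodule.sum_mem _ (fun i₀ _ => Submodule.smul_mem _ _
      (Submodule.subset_span ?_))
    refine ⟨Subsingleton.elim _ _, dg i₀, hdg i₀, ?_⟩
    intro i
    by_cases h : i = i₀
    · subst h
      have h1 : (Pi.single i (1:A) : ι → A) i = 1 := Pi.single_eq_same i 1
      rw [h1]
      have : (0:ℤ) ≤ dg i - dg i := by omega
      simp only [grZ, sub_self, if_pos le_rfl, Int.toNat_zero]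
      exact hone
    · have h1 : (Pi.single i₀ (1:A) : ι → A) i = 0 := Pi.single_eq_of_ne h 1
      rw [h1]
      exact Submodule.zero_mem _
  | succ t IH =>
    intro db
    obtain ⟨E, hE1, hE2⟩ := IH (fun s => db s.succ)
    refine ⟨fun d => max d (E ((D ((d - db 0).toNat) : ℤ) + db 0)),
      fun d => le_max_left _ _, ?_⟩
    intro d ι _ a dg ha hdg v hv
    classical
    set d₁ : ℤ := (D ((d - db 0).toNat) : ℤ) + db 0 with hd₁
    have hv0 : ∑ i, op (v i) • (a i 0) = 0 := by
      simpa using congrFun hv 0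
    have h0 := witness_gen' k A 𝒜 A (grZ k A 𝒜) D hD ι (d - db 0)
      (fun i => a i 0) (fun i => dg i - db 0) (fun i => ha i 0)
      (fun i => by show dg i - db 0 ≤ d - db 0; have := hdg i; omega) v hv0
    rw [Submodule.mem_span_set'] at h0
    obtain ⟨N, f, g, hsum⟩ := h0
    have hwsol : ∀ r, ∑ i, a i 0 * (g r : ι → A) i = 0 := by
      intro r
      have := (g r).2.1
      simpa [op_smul_eq_mul] using this
    choose jr hjr1 hjr2 using fun r => (g r).2.2
    have hvw : ∀ i, v i = ∑ r, (g r : ι → A) i * unop (f r) := by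
      intro i
      have := congrFun hsum i
      simpa [Finset.sum_apply, MulOpposite.smul_eq_mul_unop] using this.symm
    -- the new system of t equations
    have hchom : ∀ (r : Fin N) (s : Fin t),
        (∑ i, a i s.succ * (g r : ι → A) i) ∈ grZ k A 𝒜 ((jr r + db 0) - db s.succ) := by
      intro r s
      refine Submodule.sum_mem _ (fun i _ => ?_)
      exact grZ_congr' k A 𝒜 (by ring)
        (grZ_mul' k A 𝒜 hmul (ha i s.succ) (hjr2 r i))
    have hdgN : ∀ r, jr r + db 0 ≤ d₁ := fun r => by
      have := hjr1 r; omega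
    have hlamsol : ∑ r, op (unop (f r)) • (fun s => ∑ i, a i s.succ * (g r : ι → A) i : Fin t → A) = 0 := by
      funext s
      simp only [Finset.sum_apply, Pi.smul_apply, op_smul_eq_mul, Pi.zero_apply]
      rw [← sum_swap_mul A (fun i => a i s.succ) (fun i r => (g r : ι → A) i)
        (fun r => unop (f r))]
      have hvs : ∑ i, a i s.succ * v i = 0 := by
        simpa using congrFun hv s.succ
      exact (Finset.sum_congr rfl (fun i _ => by rw [← hvw i])).trans hvs
    have h1 := hE2 d₁ (Fin N)
      (fun r => (fun s => ∑ i, a i s.succ * (g r : ι → A) i))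
      (fun r => jr r + db 0) hchom hdgN (fun r => unop (f r)) hlamsol
    -- transport back along T
    have hmain := span_transfer'
      (T := fun (μ : Fin N → A) (i : ι) => ∑ r, (g r : ι → A) i * μ r)
      (ρ := @id Aᵐᵒᵖ)
      (fun x y => by funext i; simp [mul_add, Finset.sum_add_distrib])
      (fun α x => by
        funext i
        simp only [Pi.smul_apply, MulOpposite.smul_eq_mul_unop, ← mul_assoc,
          Finset.sum_mul, id_eq])
      (by funext i; simp) h1
    have hTv : (fun (μ : Fin N → A) (i : ι) => ∑ r, (g r : ι → A) i * μ r)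
        (fun r => unop (f r)) = v := by
      funext i; exact (hvw i).symm
    rw [show (fun (i : ι) => ∑ r, (g r : ι → A) i * unop (f r)) = v from hTv] at hmain
    refine Submodule.span_mono ?_ hmain
    rintro _ ⟨μ, ⟨hμ1, j, hj, hμ2⟩, rfl⟩
    refine ⟨?_, j, le_trans hj (le_max_right _ _), ?_⟩
    · funext s'
      simp only [Finset.sum_apply, Pi.smul_apply, op_smul_eq_mul, Pi.zero_apply]
      rw [sum_swap_mul A (fun i => a i s') (fun i r => (g r : ι → A) i) μ]
      rcases Fin.eq_zero_or_eq_succ s' with rfl | ⟨s, rfl⟩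
      · exact (Finset.sum_congr rfl (fun r _ => by
          rw [hwsol r, zero_mul])).trans Finset.sum_const_zero
      · have := congrFun hμ1 s
        simpa [Finset.sum_apply, op_smul_eq_mul] using this
    · intro i
      refine Submodule.sum_mem _ (fun r _ => ?_)
      exact grZ_congr' k A 𝒜 (by ring)
        (grZ_mul' k A 𝒜 hmul (hjr2 r i) (hμ2 r))


variable (B : Type) [Ring B] [Algebra k B]

lemma phi_collect (φ : A →ₐ[k] B) {ι : Type} [Fintype ι] {t : ℕ}
    (b : Fin t → B) (x : ι → Fin t → A) (y : ι → A) :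
    ∑ i, (∑ l, b l * φ (x i l)) * φ (y i) = ∑ l, b l * φ (∑ i, x i l * y i) := by
  simp_rw [Finset.sum_mul, mul_assoc, ← map_mul, map_sum, Finset.mul_sum]
  rw [Finset.sum_comm]

lemma homog_lift (𝒜 : ℕ → Submodule k A) (ℬ : ℕ → Submodule k B)
    (hA : IsConnAlg k A 𝒜) (hB : IsConnAlg k B ℬ) (φ : A →ₐ[k] B)
    (hφ : ∀ i : ℕ, ∀ x ∈ 𝒜 i, φ x ∈ ℬ i)
    [Module Aᵐᵒᵖ B] (hsm : ∀ (r : A) (x : B), op r • x = x * φ r)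
    (t : ℕ) (b : Fin t → B) (db : Fin t → ℤ)
    (hb : ∀ l, b l ∈ grZ k B ℬ (db l))
    (hspan : Submodule.span Aᵐᵒᵖ (Set.range b) = ⊤)
    (s : ℤ) (y : B) (hy : y ∈ grZ k B ℬ s) :
    ∃ c : Fin t → A, (∀ l, c l ∈ grZ k A 𝒜 (s - db l)) ∧
      y = ∑ l, b l * φ (c l) := by
  classical
  haveI decA : DirectSum.Decomposition 𝒜 := hA.2.1.chooseDecomposition
  haveI decB : DirectSum.Decomposition ℬ := hB.2.1.chooseDecomposition
  by_cases hs : 0 ≤ s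
  · -- the degree-s.toNat projection
    set π : B → B := fun z => ((DirectSum.decompose ℬ z) s.toNat : B) with hπ
    have hπadd : ∀ z z', π (z + z') = π z + π z' := by
      intro z z'
      simp [π, DirectSum.decompose_add, DirectSum.add_apply]
    -- homogeneous component extractor
    set cf : Fin t → A → A := fun l x =>
      if 0 ≤ db l ∧ db l ≤ s then ((DirectSum.decompose 𝒜 x) (s - db l).toNat : A)
      else 0 with hcf
    have key : ∀ (l : Fin t) (x : A), π (b l * φ x) = b l * φ (cf l x) := by
      intro l x
      by_cases hl : 0 ≤ db l
      · have hbl : b l ∈ ℬ (db l).toNat := by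
          have := hb l; simpa [grZ, if_pos hl] using this
        refine DirectSum.Decomposition.inductionOn 𝒜 (motive := fun x => π (b l * φ x) = b l * φ (cf l x)) ?_ ?_ ?_ x
        · simp [π, cf]
        · intro s' m
          have hmem : b l * φ (m : A) ∈ ℬ ((db l).toNat + s') :=
            hB.1 _ _ _ hbl _ (hφ s' _ m.2)
          by_cases hls : db l ≤ s
          · have hcond : 0 ≤ db l ∧ db l ≤ s := ⟨hl, hls⟩
            by_cases he : s' = (s - db l).toNat
            · subst he
              have h1 : (db l).toNat + (s - db l).toNat = s.toNat := by omega
              have h2 : π (b l * φ (m : A)) = b l * φ (m : A) := by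
                simp only [π]
                exact DirectSum.decompose_of_mem_same ℬ (h1 ▸ hmem)
              have h3 : cf l (m : A) = (m : A) := by
                simp only [cf, if_pos hcond]
                exact DirectSum.decompose_of_mem_same 𝒜 m.2
              rw [h2, h3]
            · have h2 : π (b l * φ (m : A)) = 0 := by
                simp only [π]
                rw [DirectSum.decompose_of_mem_ne ℬ hmem (by omega)]
              have h3 : cf l (m : A) = 0 := by
                simp only [cf, if_pos hcond]
                exact DirectSum.decompose_of_mem_ne 𝒜 m.2 he
              rw [h2, h3, map_zero, mul_zero]
          · have h2 : π (b l * φ (m : A)) = 0 := by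
              simp only [π]
              rw [DirectSum.decompose_of_mem_ne ℬ hmem (by omega)]
            have h3 : cf l (m : A) = 0 := by
              simp only [cf, if_neg (fun hc : 0 ≤ db l ∧ db l ≤ s => hls hc.2)]
            rw [h2, h3, map_zero, mul_zero]
        · intro x y hx hy
          have hcfadd : cf l (x + y) = cf l x + cf l y := by
            by_cases hcond : 0 ≤ db l ∧ db l ≤ s
            · simp [cf, if_pos hcond, DirectSum.decompose_add, DirectSum.add_apply]
            · simp [cf, if_neg hcond]
          rw [map_add, mul_add, hπadd, hx, hy, hcfadd, map_add, mul_add]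
      · have hbl : b l = 0 := by
          have := hb l
          simpa [grZ, if_neg hl, Submodule.mem_bot] using this
        have h3 : cf l x = 0 := by simp only [cf, if_neg (fun hc : 0 ≤ db l ∧ db l ≤ s => hl hc.1)]
        rw [hbl, zero_mul, h3, map_zero, mul_zero]
        simp [π]
    -- expand y over the generators
    have hyT : y ∈ Submodule.span Aᵐᵒᵖ (Set.range b) := by
      rw [hspan]; exact Submodule.mem_top
    obtain ⟨cc, hcc⟩ := (Submodule.mem_span_range_iff_exists_fun Aᵐᵒᵖ).mp hyT
    have hyexp : y = ∑ l, b l * φ (unop (cc l)) := by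
      rw [← hcc]
      refine Finset.sum_congr rfl (fun l _ => ?_)
      rw [← hsm (unop (cc l)) (b l), op_unop]
    refine ⟨fun l => cf l (unop (cc l)), ?_, ?_⟩
    · intro l
      by_cases hcond : 0 ≤ db l ∧ db l ≤ s
      · have h0 : (0:ℤ) ≤ s - db l := by omega
        simp only [cf, if_pos hcond, grZ, if_pos h0]
        exact SetLike.coe_mem _
      · simp only [cf, if_neg hcond]
        exact Submodule.zero_mem _
    · have hyπ : π y = y := by
        have hys : y ∈ ℬ s.toNat := by simpa [grZ, if_pos hs] using hy
        simp only [π]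
        exact DirectSum.decompose_of_mem_same ℬ hys
      calc y = π y := hyπ.symm
        _ = π (∑ l, b l * φ (unop (cc l))) := by rw [← hyexp]
        _ = ∑ l, π (b l * φ (unop (cc l))) :=
            map_sum (AddMonoidHom.mk' π hπadd) _ _
        _ = ∑ l, b l * φ (cf l (unop (cc l))) :=
            Finset.sum_congr rfl (fun l _ => key l _)
  · have hy0 : y = 0 := by
      have := hy
      simpa [grZ, if_neg hs, Submodule.mem_bot] using this
    exact ⟨0, fun l => Submodule.zero_mem _, by simp [hy0]⟩


/-- the f.p. module `B` is effectively coherent over `A` -/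
lemma module_witness (𝒜 : ℕ → Submodule k A) (ℬ : ℕ → Submodule k B)
    (hA : IsConnAlg k A 𝒜) (hB : IsConnAlg k B ℬ) (φ : A →ₐ[k] B)
    (hφ : ∀ i : ℕ, ∀ x ∈ 𝒜 i, φ x ∈ ℬ i)
    [Module Aᵐᵒᵖ B] (hsm : ∀ (r : A) (x : B), op r • x = x * φ r)
    (D : ℕ → ℕ) (hD : WitnessEC k A A 𝒜 (grZ k A 𝒜) D)
    (hmod : ModFinPres k A B 𝒜 (grZ k B ℬ)) :
    ∃ D' : ℕ → ℕ, WitnessEC k A B 𝒜 (grZ k B ℬ) D' := by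
  classical
  obtain ⟨t, b, db, hb, hspan, m, h, e, hFH, hsb⟩ := hmod
  have hone : (1 : A) ∈ 𝒜 0 := by
    rw [hA.2.2]; exact Submodule.mem_span_singleton_self 1
  obtain ⟨E, hE1, hE2⟩ := systems k A 𝒜 hA.1 hone D hD t db
  set emax : ℕ := Finset.univ.sup (fun j => (e j).toNat) with hemax
  refine ⟨fun d => max d (E (max (d:ℤ) (emax:ℤ))).toNat, fun d => le_max_left _ _, ?_⟩
  intro d n a dg ha hdg v hvsol
  -- lift each coefficient a i to a homogeneous vector over A
  have hlift := fun i => homog_lift k A B 𝒜 ℬ hA hB φ hφ hsm t b db hb hspan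
    (dg i) (a i) (ha i)
  choose c hc hceq using hlift
  -- the element w of the free module hit by v
  set w : Fin t → A := fun l => ∑ i, c i l * v i with hwdef
  have hweq : (∑ i, a i * φ (v i)) = ∑ l', b l' * φ (w l') := by
    rw [← phi_collect k A B φ b c v]
    exact Finset.sum_congr rfl (fun i _ => by rw [hceq i])
  have hvsol' : ∑ i, a i * φ (v i) = 0 := by
    rw [← hvsol]
    exact Finset.sum_congr rfl (fun i _ => (hsm (v i) (a i)).symm)
  have hwsol : IsSol A B b w := by
    show ∑ l, op (w l) • b l = 0
    have : ∑ l, op (w l) • b l = ∑ l, b l * φ (w l) :=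
      Finset.sum_congr rfl (fun l _ => hsm (w l) (b l))
    rw [this, ← hweq, hvsol']
  obtain ⟨u', hu'⟩ := (Submodule.mem_span_range_iff_exists_fun Aᵐᵒᵖ).mp (hsb.2 w hwsol)
  -- the combined system over Fin n ⊕ Fin m
  set asys : (Fin n ⊕ Fin m) → Fin t → A :=
    Sum.elim (fun i => c i) (fun j => -(h j)) with hasys
  set dgsys : (Fin n ⊕ Fin m) → ℤ := Sum.elim dg e with hdgsys
  have hhom : ∀ q l, asys q l ∈ grZ k A 𝒜 (dgsys q - db l) := by
    rintro (i | j) l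
    · exact hc i l
    · exact Submodule.neg_mem _ (hFH j l)
  have hdeg : ∀ q, dgsys q ≤ max (d:ℤ) (emax:ℤ) := by
    rintro (i | j)
    · exact le_trans (hdg i) (le_max_left _ _)
    · refine le_trans ?_ (le_max_right _ _)
      refine le_trans (Int.self_le_toNat (e j)) ?_
      exact_mod_cast Finset.le_sup (f := fun jj => (e jj).toNat) (Finset.mem_univ j)
  set V : (Fin n ⊕ Fin m) → A := Sum.elim v (fun j => unop (u' j)) with hV
  have hVsol : ∑ q, op (V q) • asys q = 0 := by
    funext l
    have h2 : ∑ j, h j l * unop (u' j) = w l := by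
      have := congrFun hu' l
      simpa [Finset.sum_apply, MulOpposite.smul_eq_mul_unop] using this
    have h1 : ∑ i, c i l * v i = w l := rfl
    simp only [Finset.sum_apply, Pi.smul_apply, op_smul_eq_mul, Pi.zero_apply,
      Fintype.sum_sum_type, hV, hasys, Sum.elim_inl, Sum.elim_inr,
      Pi.neg_apply, neg_mul, Finset.sum_neg_distrib, ← sub_eq_add_neg,
      sub_eq_zero]
    rw [h1, h2]
  have hkey := hE2 (max (d:ℤ) (emax:ℤ)) (Fin n ⊕ Fin m) asys dgsys hhom hdeg V hVsol
  -- project back to the first block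
  have hmain := span_transfer' (T := fun (W : Fin n ⊕ Fin m → A) => W ∘ Sum.inl)
    (ρ := @id Aᵐᵒᵖ) (fun x y => rfl) (fun r x => rfl) rfl hkey
  have hTV : (fun (W : Fin n ⊕ Fin m → A) => W ∘ Sum.inl) V = v := rfl
  rw [show V ∘ Sum.inl = v from hTV] at hmain
  refine Submodule.span_mono ?_ hmain
  rintro _ ⟨W, ⟨hW1, j, hj, hW2⟩, rfl⟩
  have hWsys : ∀ l, ∑ i, c i l * W (Sum.inl i) = ∑ jj, h jj l * W (Sum.inr jj) := by
    intro l
    have h3 := congrFun hW1 l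
    simp only [Finset.sum_apply, Pi.smul_apply, op_smul_eq_mul, Pi.zero_apply,
      Fintype.sum_sum_type, hasys, Sum.elim_inl, Sum.elim_inr, Pi.neg_apply,
      neg_mul, Finset.sum_neg_distrib, ← sub_eq_add_neg, sub_eq_zero] at h3
    exact h3
  refine ⟨?_, j, ?_, fun i => hW2 (Sum.inl i)⟩
  · show ∑ i, op (W (Sum.inl i)) • a i = 0
    have e1 : ∑ i, op (W (Sum.inl i)) • a i = ∑ i, a i * φ (W (Sum.inl i)) :=
      Finset.sum_congr rfl (fun i _ => hsm _ _)
    have e2 : ∑ i, a i * φ (W (Sum.inl i))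
        = ∑ l, b l * φ (∑ i, c i l * W (Sum.inl i)) := by
      rw [← phi_collect k A B φ b c (fun i => W (Sum.inl i))]
      exact Finset.sum_congr rfl (fun i _ => by rw [hceq i])
    have e3 : ∑ l, b l * φ (∑ i, c i l * W (Sum.inl i))
        = ∑ l, b l * φ (∑ jj, h jj l * W (Sum.inr jj)) := by
      exact Finset.sum_congr rfl (fun l _ => by rw [hWsys l])
    have e4 : ∑ l, b l * φ (∑ jj, h jj l * W (Sum.inr jj))
        = ∑ jj, (∑ l, b l * φ (h jj l)) * φ (W (Sum.inr jj)) := by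
      rw [phi_collect k A B φ b (fun jj => h jj) (fun jj => W (Sum.inr jj))]
    have e5 : ∀ jj, ∑ l, b l * φ (h jj l) = 0 := by
      intro jj
      have := hsb.1 jj
      have e6 : ∑ l, op (h jj l) • b l = ∑ l, b l * φ (h jj l) :=
        Finset.sum_congr rfl (fun l _ => hsm _ _)
      rw [← e6]; exact this
    rw [e1, e2, e3, e4]
    simp [e5]
  · -- degree bound
    refine le_trans hj ?_
    have h1 : E (max (d:ℤ) (emax:ℤ)) ≤ ((E (max (d:ℤ) (emax:ℤ))).toNat : ℤ) :=
      Int.self_le_toNat _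
    refine le_trans h1 ?_
    exact_mod_cast le_max_right d (E (max (d:ℤ) (emax:ℤ))).toNat


lemma grZ_map (𝒜 : ℕ → Submodule k A) (ℬ : ℕ → Submodule k B) (φ : A →ₐ[k] B)
    (hφ : ∀ i : ℕ, ∀ x ∈ 𝒜 i, φ x ∈ ℬ i) {j : ℤ} {x : A}
    (hx : x ∈ grZ k A 𝒜 j) : φ x ∈ grZ k B ℬ j := by
  by_cases hj : 0 ≤ j
  · simp only [grZ, if_pos hj] at *
    exact hφ _ _ hx
  · simp only [grZ, if_neg hj, Submodule.mem_bot] at *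
    rw [hx, map_zero]

/-- part 2 of the statement: the explicit witness for `B`. -/
lemma part_two (𝒜 : ℕ → Submodule k A) (ℬ : ℕ → Submodule k B)
    (hB : IsConnAlg k B ℬ) (φ : A →ₐ[k] B)
    (hφ : ∀ i : ℕ, ∀ x ∈ 𝒜 i, φ x ∈ ℬ i)
    [Module Aᵐᵒᵖ B] (hsm : ∀ (r : A) (x : B), op r • x = x * φ r)
    (p : ℕ) (D : ℕ → ℕ)
    (hgen : GenLE k A B (grZ k B ℬ) (⊤ : Submodule Aᵐᵒᵖ B) (p : ℤ))
    (hwit : WitnessEC k A B 𝒜 (grZ k B ℬ) D) :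
    WitnessEC k B B ℬ (grZ k B ℬ) (fun d => max (d + p) (D (d + p))) := by
  classical
  constructor
  · intro d
    exact le_trans (Nat.le_add_right d p) (le_max_left _ _)
  intro d n a dg ha hdg v hvsol
  -- decompose each v i into bounded-degree homogeneous generators of B over A
  have hv : ∀ i, v i ∈ Submodule.span Aᵐᵒᵖ
      {x : B | x ∈ (⊤ : Submodule Aᵐᵒᵖ B) ∧ ∃ j ≤ (p:ℤ), x ∈ grZ k B ℬ j} :=
    fun i => hgen Submodule.mem_top
  have hv' := fun i => Submodule.mem_span_set'.mp (hv i)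
  choose N f g hfg using hv'
  have hxin := fun (q : Σ i : Fin n, Fin (N i)) => (g q.1 q.2).2.2
  choose jx hjx1 hjx2 using hxin
  set x : (Σ i : Fin n, Fin (N i)) → B := fun q => (g q.1 q.2 : B) with hx
  set aX : (Σ i : Fin n, Fin (N i)) → B := fun q => a q.1 * x q with haX
  set dgX : (Σ i : Fin n, Fin (N i)) → ℤ := fun q => dg q.1 + jx q with hdgX
  have haXmem : ∀ q, aX q ∈ grZ k B ℬ (dgX q) :=
    fun q => grZ_mul' k B ℬ hB.1 (ha q.1) (hjx2 q)
  have hdgXle : ∀ q, dgX q ≤ ((d + p : ℕ) : ℤ) := by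
    intro q
    have h1 := hdg q.1
    have h2 := hjx1 q
    simp only [dgX]
    push_cast
    omega
  set V : (Σ i : Fin n, Fin (N i)) → A := fun q => unop (f q.1 q.2) with hV
  have hfg' : ∀ i, ∑ r, x ⟨i, r⟩ * φ (V ⟨i, r⟩) = v i := by
    intro i
    rw [← hfg i]
    refine Finset.sum_congr rfl (fun r _ => ?_)
    rw [← hsm (V ⟨i, r⟩) (x ⟨i, r⟩)]
    simp [V, x]
  have hVsol : ∑ q, op (V q) • aX q = 0 := by
    have h1 : ∑ q, op (V q) • aX q = ∑ q : (Σ i : Fin n, Fin (N i)),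
        a q.1 * (x q * φ (V q)) := by
      refine Finset.sum_congr rfl (fun q _ => ?_)
      rw [hsm, mul_assoc]
    rw [h1, ← Finset.univ_sigma_univ, Finset.sum_sigma]
    have h2 : ∀ i : Fin n, ∑ r, a i * (x ⟨i, r⟩ * φ (V ⟨i, r⟩)) = a i * v i := by
      intro i
      rw [← Finset.mul_sum, hfg' i]
    rw [Finset.sum_congr rfl (fun i _ => h2 i)]
    rw [← hvsol]
    exact Finset.sum_congr rfl (fun i _ => (op_smul_eq_mul _ _).symm)
  have hkey := witness_gen' k A 𝒜 B (grZ k B ℬ) D hwit _ ((d + p : ℕ) : ℤ)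
    aX dgX haXmem hdgXle V hVsol
  rw [Int.toNat_natCast] at hkey
  -- transport along T
  set T : ((Σ i : Fin n, Fin (N i)) → A) → (Fin n → B) :=
    fun W i => ∑ r : Fin (N i), x ⟨i, r⟩ * φ (W ⟨i, r⟩) with hT
  have hTadd : ∀ W W', T (W + W') = T W + T W' := by
    intro W W'
    funext i
    simp [T, mul_add, Finset.sum_add_distrib]
  have hTsmul : ∀ (α : Aᵐᵒᵖ) (W : (Σ i : Fin n, Fin (N i)) → A),
      T (α • W) = op (φ (unop α)) • T W := by
    intro α W
    funext i
    simp only [T, Pi.smul_apply, MulOpposite.smul_eq_mul_unop, op_smul_eq_mul,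
      unop_op, map_mul, ← mul_assoc, Finset.sum_mul]
  have hT0 : T 0 = 0 := by
    funext i
    simp [T]
  have hmain := span_transfer' (T := T) (ρ := fun α : Aᵐᵒᵖ => op (φ (unop α)))
    hTadd hTsmul hT0 hkey
  have hTV : T V = v := by
    funext i
    exact hfg' i
  rw [hTV] at hmain
  refine Submodule.span_mono ?_ hmain
  rintro _ ⟨W, ⟨hW1, j, hj, hW2⟩, rfl⟩
  refine ⟨?_, j, ?_, ?_⟩
  · -- T W is a solution of the B-equation
    show ∑ i, op (T W i) • a i = 0
    have h1 : ∑ i, op (T W i) • a i = ∑ i, a i * T W i :=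
      Finset.sum_congr rfl (fun i _ => op_smul_eq_mul _ _)
    have h2 : ∑ i, a i * T W i = ∑ q : (Σ i : Fin n, Fin (N i)),
        a q.1 * (x q * φ (W q)) := by
      rw [← Finset.univ_sigma_univ, Finset.sum_sigma]
      refine Finset.sum_congr rfl (fun i _ => ?_)
      simp only [T, Finset.mul_sum]
    have h3 : ∑ q : (Σ i : Fin n, Fin (N i)), a q.1 * (x q * φ (W q)) = 0 := by
      rw [← hW1]
      refine Finset.sum_congr rfl (fun q _ => ?_)
      rw [hsm, mul_assoc]
    rw [h1, h2, h3]
  · -- degree bound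
    refine le_trans hj ?_
    exact_mod_cast le_max_right (d + p) (D (d + p))
  · -- homogeneity
    intro i
    refine Submodule.sum_mem _ (fun r _ => ?_)
    have h1 := grZ_mul' k B ℬ hB.1 (hjx2 ⟨i, r⟩)
      (grZ_map k A B 𝒜 ℬ φ hφ (hW2 ⟨i, r⟩))
    exact grZ_congr' k B ℬ (by simp only [dgX]; ring) h1

/-- generation of `⊤` in bounded degrees from the module generators -/
lemma genle_top (ℬ : ℕ → Submodule k B) [Module Aᵐᵒᵖ B]
    (t : ℕ) (b : Fin t → B) (db : Fin t → ℤ)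
    (hb : ∀ l, b l ∈ grZ k B ℬ (db l))
    (hspan : Submodule.span Aᵐᵒᵖ (Set.range b) = ⊤) :
    GenLE k A B (grZ k B ℬ) (⊤ : Submodule Aᵐᵒᵖ B)
      ((Finset.univ.sup (fun l => (db l).toNat) : ℕ) : ℤ) := by
  intro y _
  have hy : y ∈ Submodule.span Aᵐᵒᵖ (Set.range b) := by
    rw [hspan]; exact Submodule.mem_top
  refine Submodule.span_mono ?_ hy
  rintro _ ⟨l, rfl⟩
  refine ⟨Submodule.mem_top, db l, ?_, hb l⟩
  refine le_trans (Int.self_le_toNat _) ?_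
  exact_mod_cast Finset.le_sup (f := fun l => (db l).toNat) (Finset.mem_univ l)

end Aux2


/-- if `A` is effectively coherent and `B` is finitely presented as a
graded right `A`-module via a degree-preserving algebra map `φ : A → B`, then `B` is
effectively coherent, with the stated witness. -/
theorem statement_6 (k A B : Type) [Field k] [Ring A] [Algebra k A]
    [Ring B] [Algebra k B]
    (𝒜 : ℕ → Submodule k A) (ℬ : ℕ → Submodule k B)
    (hA : IsConnAlg k A 𝒜) (hB : IsConnAlg k B ℬ)
    (φ : A →ₐ[k] B) (hφ : ∀ i : ℕ, ∀ x ∈ 𝒜 i, φ x ∈ ℬ i) :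
    letI : Module Aᵐᵒᵖ B := Module.compHom B (RingHom.op (φ : A →+* B))
    ((EffCohAlg k A 𝒜 → ModFinPres k A B 𝒜 (grZ k B ℬ) → EffCohAlg k B ℬ) ∧
     (∀ (p : ℕ) (D : ℕ → ℕ),
        GenLE k A B (grZ k B ℬ) (⊤ : Submodule Aᵐᵒᵖ B) (p : ℤ) →
        WitnessEC k A B 𝒜 (grZ k B ℬ) D →
        WitnessEC k B B ℬ (grZ k B ℬ) (fun d => max (d + p) (D (d + p))))) := by
  letI : Module Aᵐᵒᵖ B := Module.compHom B (RingHom.op (φ : A →+* B))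
  refine ⟨?_, ?_⟩
  · intro hEC hFP
    obtain ⟨D, hD⟩ := hEC
    obtain ⟨D', hD'⟩ := module_witness k A B 𝒜 ℬ hA hB φ hφ
      (fun r x => rfl) D hD hFP
    obtain ⟨t, b, db, hb, hspan, -⟩ := hFP
    exact ⟨_, part_two k A B 𝒜 ℬ hB φ hφ (fun r x => rfl)
      (Finset.univ.sup (fun l => (db l).toNat)) D'
      (genle_top k A B ℬ t b db hb hspan) hD'⟩
  · intro p D hgen hwit
    exact part_two k A B 𝒜 ℬ hB φ hφ (fun r x => rfl) p D hgen hwit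

end NCG
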